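/- Let $\overline{u} = \overline{u}_\theta(r) e_\theta + \overline{u}_z(r) e_z$ be a radially symmetric vector field with no radial component (in cylindrical coordinates on $\mathbb{R}^3$), with $\overline{u}_\theta, \overline{u}_z$ continuously differentiable. Then $\overline{u}$ is divergence-free, and the convective term satisfies $(\overline{u}\cdot\nabla)\overline{u} = -\frac{\overline{u}_\theta(r)^2}{r} e_r = -\nabla\Big(\int_1^r \frac{\overline{u}_\theta(\rho)^2}{\rho}\,d\rho\Big)$, i.e. it is a gradient field. -/

import Mathlib

open Real MeasureTheory intervalIntegral

/-- Partial derivative in direction `i` of a scalar field on `ℝ³`. -/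
noncomputable def pd (i : Fin 3) (f : (Fin 3 → ℝ) → ℝ) : (Fin 3 → ℝ) → ℝ :=
  fun x => fderiv ℝ f x (Pi.single i 1)

/-- Distance to the vertical axis. -/
noncomputable def rr (x : Fin 3 → ℝ) : ℝ := Real.sqrt (x 0 ^ 2 + x 1 ^ 2)

/-- Radial unit vector. -/
noncomputable def er (x : Fin 3 → ℝ) : Fin 3 → ℝ :=
  fun i => if i = 0 then x 0 / rr x else if i = 1 then x 1 / rr x else 0

/-- A radially symmetric field `u = g(r) e_θ + h(r) e_z` with no radial component. -/
noncomputable def uRad (g h : ℝ → ℝ) (x : Fin 3 → ℝ) : Fin 3 → ℝ :=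
  fun i => if i = 0 then -(x 1 / rr x) * g (rr x)
    else if i = 1 then (x 0 / rr x) * g (rr x) else h (rr x)

noncomputable def Lx (x : Fin 3 → ℝ) : (Fin 3 → ℝ) →L[ℝ] ℝ :=
  (x 0 / rr x) • ContinuousLinearMap.proj 0 + (x 1 / rr x) • ContinuousLinearMap.proj 1

lemma Lx_apply (x v : Fin 3 → ℝ) :
    Lx x v = x 0 / rr x * v 0 + x 1 / rr x * v 1 := by
  simp [Lx]

lemma hasFDerivAt_rr {x : Fin 3 → ℝ} (hx : 0 < rr x) : HasFDerivAt rr (Lx x) x := by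
  have hpos : 0 < x 0 ^ 2 + x 1 ^ 2 := by
    have := hx
    rw [rr, Real.sqrt_pos] at this
    exact this
  have h0 : HasFDerivAt (fun y : Fin 3 → ℝ => y 0)
      (ContinuousLinearMap.proj 0 : (Fin 3 → ℝ) →L[ℝ] ℝ) x :=
    hasFDerivAt_apply 0 x
  have h1 : HasFDerivAt (fun y : Fin 3 → ℝ => y 1)
      (ContinuousLinearMap.proj 1 : (Fin 3 → ℝ) →L[ℝ] ℝ) x :=
    hasFDerivAt_apply 1 x
  have hpos' : 0 < x 0 * x 0 + x 1 * x 1 := by nlinarith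
  have hq : HasFDerivAt (fun y : Fin 3 → ℝ => y 0 * y 0 + y 1 * y 1)
      ((x 0 • (ContinuousLinearMap.proj 0 : (Fin 3 → ℝ) →L[ℝ] ℝ)
          + x 0 • (ContinuousLinearMap.proj 0 : (Fin 3 → ℝ) →L[ℝ] ℝ))
        + (x 1 • (ContinuousLinearMap.proj 1 : (Fin 3 → ℝ) →L[ℝ] ℝ)
          + x 1 • (ContinuousLinearMap.proj 1 : (Fin 3 → ℝ) →L[ℝ] ℝ))) x :=
    (h0.mul h0).add (h1.mul h1)
  have hs := (Real.hasDerivAt_sqrt hpos'.ne').comp_hasFDerivAt x hq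
  have hrr : rr = fun y : Fin 3 → ℝ => Real.sqrt (y 0 * y 0 + y 1 * y 1) := by
    funext y; rw [rr]; ring_nf
  have hsq : Real.sqrt (x 0 * x 0 + x 1 * x 1) = rr x := by rw [hrr]
  have hrne : rr x ≠ 0 := hx.ne'
  rw [hrr]
  refine HasFDerivAt.congr_fderiv hs ?_
  ext v
  simp only [Lx_apply, ContinuousLinearMap.smul_apply, ContinuousLinearMap.add_apply,
    ContinuousLinearMap.proj_apply, smul_eq_mul, Function.comp]
  rw [hsq]
  field_simp
  ring

lemma pd_of_hasFDerivAt {f : (Fin 3 → ℝ) → ℝ} {f' : (Fin 3 → ℝ) →L[ℝ] ℝ} {x : Fin 3 → ℝ}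
    (i : Fin 3) (hf : HasFDerivAt f f' x) : pd i f x = f' (Pi.single i 1) := by
  rw [pd, hf.fderiv]

theorem radial_field_convective_term_is_gradient
    (g h : ℝ → ℝ) (hg : ContDiff ℝ 1 g) (hh : ContDiff ℝ 1 h) :
    ∀ x : Fin 3 → ℝ, 0 < rr x →
      -- divergence free
      ((∑ i, pd i (fun y => uRad g h y i) x) = 0) ∧
      -- the convective term is `-(g(r)²/r) e_r`
      (∀ i : Fin 3,
        (∑ j, uRad g h x j * pd j (fun y => uRad g h y i) x)
          = -(g (rr x) ^ 2 / rr x) * er x i) ∧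
      -- and it is the gradient of `-∫_1^r g(ρ)²/ρ dρ`
      (∀ i : Fin 3,
        (∑ j, uRad g h x j * pd j (fun y => uRad g h y i) x)
          = -(pd i (fun y => ∫ ρ in (1 : ℝ)..(rr y), g ρ ^ 2 / ρ) x)) := by
  intro x hx
  have hrne : rr x ≠ 0 := hx.ne'
  set r := rr x with hrdef
  set a := x 0 with hadef
  set b := x 1 with hbdef
  have hL : HasFDerivAt rr (Lx x) x := hasFDerivAt_rr hx
  have hgd : HasDerivAt g (deriv g r) r :=
    ((hg.differentiable one_ne_zero) r).hasDerivAt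
  have hhd : HasDerivAt h (deriv h r) r :=
    ((hh.differentiable one_ne_zero) r).hasDerivAt
  set G : ℝ := g r / r with hGdef
  set G' : ℝ := (deriv g r * r - g r * 1) / r ^ 2 with hG'def
  have hGder : HasDerivAt (fun s => g s / s) G' r := hgd.div (hasDerivAt_id r) hrne
  have hGc : HasFDerivAt (fun y => g (rr y) / rr y) (G' • Lx x) x :=
    by have := hGder.comp_hasFDerivAt x hL; exact this
  have hHc : HasFDerivAt (fun y => h (rr y)) (deriv h r • Lx x) x :=
    hhd.comp_hasFDerivAt x hL
  have h0p : HasFDerivAt (fun y : Fin 3 → ℝ => y 0)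
      (ContinuousLinearMap.proj 0 : (Fin 3 → ℝ) →L[ℝ] ℝ) x :=
    hasFDerivAt_apply 0 x
  have h1p : HasFDerivAt (fun y : Fin 3 → ℝ => y 1)
      (ContinuousLinearMap.proj 1 : (Fin 3 → ℝ) →L[ℝ] ℝ) x :=
    hasFDerivAt_apply 1 x
  -- component 0
  have D0 : HasFDerivAt (fun y => -(y 1 / rr y) * g (rr y))
      (-(b • (G' • Lx x) + G • (ContinuousLinearMap.proj 1 : (Fin 3 → ℝ) →L[ℝ] ℝ))) x := by
    have := (h1p.mul hGc).neg
    have heq : (fun y : Fin 3 → ℝ => -(y 1 / rr y) * g (rr y))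
        = fun y => -(y 1 * (g (rr y) / rr y)) := by
      funext y; ring
    rw [heq]
    exact this
  have D1 : HasFDerivAt (fun y => (y 0 / rr y) * g (rr y))
      (a • (G' • Lx x) + G • (ContinuousLinearMap.proj 0 : (Fin 3 → ℝ) →L[ℝ] ℝ)) x := by
    have := h0p.mul hGc
    have heq : (fun y : Fin 3 → ℝ => (y 0 / rr y) * g (rr y))
        = fun y => y 0 * (g (rr y) / rr y) := by
      funext y; ring
    rw [heq]
    exact this
  -- pd values
  have p00 : pd 0 (fun y => -(y 1 / rr y) * g (rr y)) x = -(b * (G' * (a / r))) := by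
    rw [pd_of_hasFDerivAt 0 D0]
    simp [Lx_apply, Pi.single_apply, r, a, b]
  have p10 : pd 1 (fun y => -(y 1 / rr y) * g (rr y)) x = -(b * (G' * (b / r)) + G) := by
    rw [pd_of_hasFDerivAt 1 D0]
    simp [Lx_apply, Pi.single_apply, r, a, b]
  have p20 : pd 2 (fun y => -(y 1 / rr y) * g (rr y)) x = 0 := by
    rw [pd_of_hasFDerivAt 2 D0]
    simp [Lx_apply, Pi.single_apply, r, a, b]
  have p01 : pd 0 (fun y => (y 0 / rr y) * g (rr y)) x = a * (G' * (a / r)) + G := by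
    rw [pd_of_hasFDerivAt 0 D1]
    simp [Lx_apply, Pi.single_apply, r, a, b]
  have p11 : pd 1 (fun y => (y 0 / rr y) * g (rr y)) x = a * (G' * (b / r)) := by
    rw [pd_of_hasFDerivAt 1 D1]
    simp [Lx_apply, Pi.single_apply, r, a, b]
  have p21 : pd 2 (fun y => (y 0 / rr y) * g (rr y)) x = 0 := by
    rw [pd_of_hasFDerivAt 2 D1]
    simp [Lx_apply, Pi.single_apply, r, a, b]
  have p02 : pd 0 (fun y => h (rr y)) x = deriv h r * (a / r) := by
    rw [pd_of_hasFDerivAt 0 hHc]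
    simp [Lx_apply, Pi.single_apply, r, a, b]
  have p12 : pd 1 (fun y => h (rr y)) x = deriv h r * (b / r) := by
    rw [pd_of_hasFDerivAt 1 hHc]
    simp [Lx_apply, Pi.single_apply, r, a, b]
  have p22 : pd 2 (fun y => h (rr y)) x = 0 := by
    rw [pd_of_hasFDerivAt 2 hHc]
    simp [Lx_apply, Pi.single_apply, r, a, b]
  -- the integral
  have hcont : ContinuousOn (fun ρ : ℝ => g ρ ^ 2 / ρ) (Set.Ioi 0) :=
    ((hg.continuous.pow 2).continuousOn).div continuousOn_id (fun ρ hρ => ne_of_gt hρ)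
  have hF : HasDerivAt (fun t => ∫ ρ in (1 : ℝ)..t, g ρ ^ 2 / ρ) (g r ^ 2 / r) r := by
    apply intervalIntegral.integral_hasDerivAt_right
    · apply (hcont.mono ?_).intervalIntegrable
      intro t ht
      have h1 : min 1 r ≤ t := ht.1
      have : (0 : ℝ) < min 1 r := lt_min one_pos hx
      exact lt_of_lt_of_le this h1
    · exact hcont.stronglyMeasurableAtFilter isOpen_Ioi r hx
    · exact hcont.continuousAt (Ioi_mem_nhds hx)
  have hΦ : HasFDerivAt (fun y => ∫ ρ in (1 : ℝ)..(rr y), g ρ ^ 2 / ρ)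
      ((g r ^ 2 / r) • Lx x) x := by have := hF.comp_hasFDerivAt x hL; exact this
  have pΦ0 : pd 0 (fun y => ∫ ρ in (1 : ℝ)..(rr y), g ρ ^ 2 / ρ) x
      = g r ^ 2 / r * (a / r) := by
    rw [pd_of_hasFDerivAt 0 hΦ]
    simp [Lx_apply, Pi.single_apply, r, a, b]
  have pΦ1 : pd 1 (fun y => ∫ ρ in (1 : ℝ)..(rr y), g ρ ^ 2 / ρ) x
      = g r ^ 2 / r * (b / r) := by
    rw [pd_of_hasFDerivAt 1 hΦ]
    simp [Lx_apply, Pi.single_apply, r, a, b]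
  have pΦ2 : pd 2 (fun y => ∫ ρ in (1 : ℝ)..(rr y), g ρ ^ 2 / ρ) x = 0 := by
    rw [pd_of_hasFDerivAt 2 hΦ]
    simp [Lx_apply, Pi.single_apply, r, a, b]
  have hr2 : r ^ 2 = a ^ 2 + b ^ 2 := by
    rw [hrdef, rr, sq_sqrt]
    positivity
  have hu0 : uRad g h x 0 = -(b / r) * g r := by simp [uRad, r, a, b]
  have hu1 : uRad g h x 1 = (a / r) * g r := by simp [uRad, r, a, b]
  have hu2 : uRad g h x 2 = h r := by simp [uRad, r]
  refine ⟨?_, ?_, ?_⟩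
  · rw [Fin.sum_univ_three]
    have e0 : pd 0 (fun y => uRad g h y 0) x = -(b * (G' * (a / r))) := by
      rw [show (fun y => uRad g h y 0) = fun y => -(y 1 / rr y) * g (rr y) by
        funext y; simp [uRad]]
      exact p00
    have e1 : pd 1 (fun y => uRad g h y 1) x = a * (G' * (b / r)) := by
      rw [show (fun y => uRad g h y 1) = fun y => (y 0 / rr y) * g (rr y) by
        funext y; simp [uRad]]
      exact p11
    have e2 : pd 2 (fun y => uRad g h y 2) x = 0 := by
      rw [show (fun y => uRad g h y 2) = fun y => h (rr y) by
        funext y; simp [uRad]]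
      exact p22
    rw [e0, e1, e2]
    ring
  · -- convective term
    have f0 : (fun y => uRad g h y 0) = fun y => -(y 1 / rr y) * g (rr y) :=
      funext fun y => by simp [uRad]
    have f1 : (fun y => uRad g h y 1) = fun y => (y 0 / rr y) * g (rr y) :=
      funext fun y => by simp [uRad]
    have f2 : (fun y => uRad g h y 2) = fun y => h (rr y) :=
      funext fun y => by simp [uRad]
    have he0 : er x 0 = a / r := by simp [er, r, a]
    have he1 : er x 1 = b / r := by simp [er, r, b]
    have he2 : er x 2 = 0 := by simp [er]
    intro i
    fin_cases i
    · simp only [Fin.isValue, Fin.mk_zero, Fin.mk_one, Fin.reduceFinMk]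
      rw [Fin.sum_univ_three, f0, hu0, hu1, hu2, p00, p10, p20, he0, hGdef, hG'def]
      field_simp
      ring
    · simp only [Fin.isValue, Fin.mk_zero, Fin.mk_one, Fin.reduceFinMk]
      rw [Fin.sum_univ_three, f1, hu0, hu1, hu2, p01, p11, p21, he1, hGdef, hG'def]
      field_simp
      ring
    · simp only [Fin.isValue, Fin.mk_zero, Fin.mk_one, Fin.reduceFinMk]
      rw [Fin.sum_univ_three, f2, hu0, hu1, hu2, p02, p12, p22, he2]
      ring
  · -- gradient
    have f0 : (fun y => uRad g h y 0) = fun y => -(y 1 / rr y) * g (rr y) :=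
      funext fun y => by simp [uRad]
    have f1 : (fun y => uRad g h y 1) = fun y => (y 0 / rr y) * g (rr y) :=
      funext fun y => by simp [uRad]
    have f2 : (fun y => uRad g h y 2) = fun y => h (rr y) :=
      funext fun y => by simp [uRad]
    intro i
    fin_cases i
    · simp only [Fin.isValue, Fin.mk_zero, Fin.mk_one, Fin.reduceFinMk]
      rw [Fin.sum_univ_three, f0, hu0, hu1, hu2, p00, p10, p20, pΦ0, hGdef, hG'def]
      field_simp
      ring
    · simp only [Fin.isValue, Fin.mk_zero, Fin.mk_one, Fin.reduceFinMk]
      rw [Fin.sum_univ_three, f1, hu0, hu1, hu2, p01, p11, p21, pΦ1, hGdef, hG'def]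
      field_simp
      ring
    · simp only [Fin.isValue, Fin.mk_zero, Fin.mk_one, Fin.reduceFinMk]
      rw [Fin.sum_univ_three, f2, hu0, hu1, hu2, p02, p12, p22, pΦ2]
      ring
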